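/- Karamata's integration theorem (convergent case): if g : [t₀, ∞) → (0, ∞) is locally bounded, measurable, and regularly varying with index α < −1, then ∫_t^∞ g(s) ds < ∞ for large t and t·g(t)/∫_t^∞ g(s) ds → −α − 1 as t → ∞. -/

import Mathlib

/-!
Write `g x = x ^ α ℓ(x)` and `h u = log ℓ(e^u)`. Regular variation of `g` says that
`h (u + v) - h u → 0` for every `v`; for measurable `h` this convergence is uniform in
`v ∈ [0, 1]` (Egorov's theorem plus a measure-counting argument), and chaining unit steps gives
Potter's bound `g (t x) ≤ e^ε x^(α + ε) g t` for large `t` and all `x ≥ 1`. Choosing `α + ε < -1`,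
this dominates `x ↦ g (t x) / g t` on `(1, ∞)` by an integrable function, so `g` is integrable
near infinity and, by dominated convergence,
`∫_t^∞ g / (t g t) = ∫_1^∞ g (t x) / g t dx → ∫_1^∞ x ^ α dx = -1 / (α + 1)`.
-/

open Filter MeasureTheory Set Real Topology

section UniformConvergence

variable {h : ℝ → ℝ}

theorem exists_volume_le_eventually_forall_abs_sub_lt (hm : Measurable h)
    (hp : ∀ v, Tendsto (fun u => h (u + v) - h u) atTop (𝓝 0)) {b : ℕ → ℝ}
    (hb : Tendsto b atTop atTop) {δ η : ℝ} (hδ : 0 < δ) (hη : 0 < η) :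
    ∃ t, volume t ≤ ENNReal.ofReal δ ∧
      ∀ᶠ n in atTop, ∀ w ∈ Icc 0 2 \ t, |h (b n + w) - h (b n)| < η := by
  obtain ⟨t, -, -, ht, hunif⟩ := tendstoUniformlyOn_of_ae_tendsto (μ := volume)
    (fun n => ((hm.comp (measurable_const_add (b n))).sub_const _).stronglyMeasurable)
    stronglyMeasurable_const measurableSet_Icc measure_Icc_lt_top.ne
    (ae_of_all _ fun w _ => (hp w).comp hb) hδ
  refine ⟨t, ht, (Metric.tendstoUniformlyOn_iff.1 hunif η hη).mono fun n hn w hw => ?_⟩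
  have := hn w hw
  rwa [dist_zero_left, Real.norm_eq_abs] at this

/-- Uniform convergence theorem for additively slowly varying measurable functions. -/
theorem eventually_forall_Icc_abs_sub_le (hm : Measurable h)
    (hp : ∀ v, Tendsto (fun u => h (u + v) - h u) atTop (𝓝 0)) {ε : ℝ} (hε : 0 < ε) :
    ∀ᶠ u in atTop, ∀ v ∈ Icc (0 : ℝ) 1, |h (u + v) - h u| ≤ ε := by
  by_contra! hcon
  choose u hu v hv hbig using fun n : ℕ => frequently_atTop.1 hcon n
  have hu_top : Tendsto u atTop atTop := tendsto_atTop_mono hu tendsto_natCast_atTop_atTop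
  have huv_top : Tendsto (fun n => u n + v n) atTop atTop :=
    tendsto_atTop_mono (fun n => le_add_of_nonneg_right (hv n).1) hu_top
  have hthird : (0 : ℝ) < 1 / 3 := by norm_num
  obtain ⟨t₁, ht₁, hunif₁⟩ :=
    exists_volume_le_eventually_forall_abs_sub_lt hm hp hu_top hthird (half_pos hε)
  obtain ⟨t₂, ht₂, hunif₂⟩ :=
    exists_volume_le_eventually_forall_abs_sub_lt hm hp huv_top hthird (half_pos hε)
  obtain ⟨n, hn₁, hn₂⟩ := (hunif₁.and hunif₂).exists
  -- `[1, 2]` has measure `1`, more than the `2 / 3` covered by `t₁` and `t₂ + v n`.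
  obtain ⟨w, hw, hw₁, hw₂⟩ : ∃ w ∈ Icc (1 : ℝ) 2, w ∉ t₁ ∧ w - v n ∉ t₂ := by
    by_contra! hcov
    have hsub : Icc (1 : ℝ) 2 ⊆ t₁ ∪ (fun w => w + -v n) ⁻¹' t₂ := fun w hw =>
      (em (w ∈ t₁)).elim Or.inl fun hw₁ => Or.inr (by simpa [sub_eq_add_neg] using hcov w hw hw₁)
    have := (measure_mono (μ := volume) hsub).trans (measure_union_le _ _)
    rw [measure_preimage_add_right, Real.volume_Icc] at this
    have h23 := this.trans (add_le_add ht₁ ht₂)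
    rw [← ENNReal.ofReal_add (by norm_num) (by norm_num), ENNReal.ofReal_le_ofReal_iff (by norm_num)]
      at h23
    norm_num at h23
  have e₁ := hn₁ w ⟨⟨by linarith [hw.1], hw.2⟩, hw₁⟩
  have e₂ := hn₂ (w - v n) ⟨⟨by linarith [hw.1, (hv n).2], by linarith [hw.2, (hv n).1]⟩, hw₂⟩
  rw [add_add_sub_cancel] at e₂
  have e₃ := hbig n
  rw [abs_lt] at e₁ e₂
  rcases lt_abs.1 e₃ with e₃ | e₃ <;> linarith [e₁.1, e₁.2, e₂.1, e₂.2]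

theorem sub_le_mul_add_one_of_forall_Icc {ε U : ℝ}
    (hloc : ∀ u, U ≤ u → ∀ v ∈ Icc (0 : ℝ) 1, h (u + v) - h u ≤ ε)
    {u v : ℝ} (hu : U ≤ u) (hv : 0 ≤ v) : h (u + v) - h u ≤ ε * (v + 1) := by
  have hε : 0 ≤ ε := by simpa using hloc U le_rfl 0 ⟨le_rfl, zero_le_one⟩
  have chain : ∀ n : ℕ, ∀ u, U ≤ u → ∀ v ∈ Icc (n : ℝ) (n + 1), h (u + v) - h u ≤ ε * (n + 1) := by
    intro n
    induction n with
    | zero => intro u hu v hv; simpa using hloc u hu v (by simpa using hv)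
    | succ n ih =>
      intro u hu v hv
      push_cast at hv ⊢
      have h₁ := hloc u hu 1 ⟨zero_le_one, le_rfl⟩
      have h₂ := ih (u + 1) (by linarith) (v - 1) ⟨by linarith [hv.1], by linarith [hv.2]⟩
      rw [add_add_sub_cancel] at h₂
      linarith
  calc h (u + v) - h u ≤ ε * (⌊v⌋₊ + 1) :=
        chain _ u hu v ⟨Nat.floor_le hv, (Nat.lt_floor_add_one v).le⟩
    _ ≤ ε * (v + 1) := by gcongr; exact Nat.floor_le hv

end UniformConvergence

/-- With `g x = x ^ α * ℓ x`, this is `u ↦ log ℓ(e^u)`. -/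
noncomputable def logSlowPart (g : ℝ → ℝ) (α u : ℝ) : ℝ := log (g (exp u)) - α * u

section RegularVariation

variable {g : ℝ → ℝ} {α : ℝ}

theorem tendsto_logSlowPart_add_sub (hpos : ∀ᶠ s in atTop, 0 < g s)
    (hrv : ∀ x : ℝ, 0 < x → Tendsto (fun t => g (t * x) / g t) atTop (𝓝 (x ^ α))) (v : ℝ) :
    Tendsto (fun u => logSlowPart g α (u + v) - logSlowPart g α u) atTop (𝓝 0) := by
  have hlog : Tendsto (fun t => log (g (t * exp v) / g t)) atTop (𝓝 (α * v)) := by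
    have := (hrv (exp v) (exp_pos v)).log (by positivity)
    rwa [log_rpow (exp_pos v), log_exp] at this
  have key : Tendsto (fun u => log (g (exp (u + v)) / g (exp u)) - α * v) atTop (𝓝 0) := by
    simpa [exp_add] using (hlog.comp tendsto_exp_atTop).sub_const (α * v)
  have hpos₁ : ∀ᶠ u in atTop, 0 < g (exp u) := tendsto_exp_atTop.eventually hpos
  have hpos₂ : ∀ᶠ u in atTop, 0 < g (exp (u + v)) :=
    (tendsto_exp_atTop.comp (tendsto_atTop_add_const_right atTop v tendsto_id)).eventually hpos
  refine key.congr' ?_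
  filter_upwards [hpos₁, hpos₂] with u hu huv
  rw [logSlowPart, logSlowPart, log_div huv.ne' hu.ne']
  ring

variable (hmeas : Measurable g) (hpos : ∀ᶠ s in atTop, 0 < g s)
  (hrv : ∀ x : ℝ, 0 < x → Tendsto (fun t => g (t * x) / g t) atTop (𝓝 (x ^ α)))
include hmeas hpos hrv

/-- Potter's bound. -/
theorem eventually_le_exp_mul_rpow_mul {ε : ℝ} (hε : 0 < ε) :
    ∀ᶠ t in atTop, ∀ x, 1 ≤ x → g (t * x) ≤ exp ε * x ^ (α + ε) * g t := by
  have hm : Measurable (logSlowPart g α) :=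
    ((hmeas.comp measurable_exp).log).sub (measurable_const.mul measurable_id)
  obtain ⟨U, hU⟩ := eventually_atTop.1
    (eventually_forall_Icc_abs_sub_le hm (tendsto_logSlowPart_add_sub hpos hrv) hε)
  obtain ⟨T, hT⟩ := eventually_atTop.1 hpos
  filter_upwards [eventually_ge_atTop (exp U), eventually_ge_atTop T, eventually_gt_atTop 0]
    with t htU htT ht x hx
  have hx0 : 0 < x := by linarith
  have hpot := sub_le_mul_add_one_of_forall_Icc (fun u hu v hv => (abs_le.1 (hU u hu v hv)).2)
    ((le_log_iff_exp_le ht).2 htU) (log_nonneg hx)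
  rw [logSlowPart, logSlowPart, exp_add, exp_log ht, exp_log hx0] at hpot
  have hgt := hT t htT
  have hgtx := hT (t * x) (htT.trans (le_mul_of_one_le_right ht.le hx))
  rw [← log_le_log_iff hgtx (by positivity), log_mul (by positivity) hgt.ne',
    log_mul (by positivity) (by positivity), log_exp, log_rpow hx0]
  linarith

theorem eventually_integrableOn_Ioi (hα : α < -1) : ∀ᶠ t in atTop, IntegrableOn g (Ioi t) := by
  obtain ⟨ε, hε, hβ⟩ : ∃ ε, 0 < ε ∧ α + ε < -1 := ⟨(-1 - α) / 2, by linarith, by linarith⟩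
  filter_upwards [eventually_le_exp_mul_rpow_mul hmeas hpos hrv hε,
    eventually_forall_ge_atTop.2 hpos, eventually_gt_atTop 0] with t hbound hpos_t ht
  have hcomp : IntegrableOn (fun x => g (t * x)) (Ioi 1) := by
    refine (((integrableOn_Ioi_rpow_of_lt hβ one_pos).const_mul (exp ε)).mul_const (g t)).mono'
      (hmeas.comp (measurable_const_mul t)).aestronglyMeasurable ?_
    refine ae_restrict_of_forall_mem measurableSet_Ioi fun x (hx : 1 < x) => ?_
    rw [norm_of_nonneg (hpos_t _ (le_mul_of_one_le_right ht.le hx.le)).le]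
    exact hbound x hx.le
  simpa using (integrableOn_Ioi_comp_mul_left_iff g 1 ht).1 hcomp

theorem tendsto_integral_Ioi_one_comp_mul_div (hα : α < -1) :
    Tendsto (fun t => ∫ x in Ioi 1, g (t * x) / g t) atTop (𝓝 (-1 / (α + 1))) := by
  obtain ⟨ε, hε, hβ⟩ : ∃ ε, 0 < ε ∧ α + ε < -1 := ⟨(-1 - α) / 2, by linarith, by linarith⟩
  have hval : ∫ x in Ioi (1 : ℝ), x ^ α = -1 / (α + 1) := by
    rw [integral_Ioi_rpow_of_lt hα one_pos, one_rpow]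
  rw [← hval]
  refine tendsto_integral_filter_of_dominated_convergence (fun x => exp ε * x ^ (α + ε))
    (Eventually.of_forall fun t =>
      ((hmeas.comp (measurable_const_mul t)).div_const _).aestronglyMeasurable) ?_
    ((integrableOn_Ioi_rpow_of_lt hβ one_pos).const_mul _)
    (ae_restrict_of_forall_mem measurableSet_Ioi fun x hx => hrv x (zero_lt_one.trans hx))
  filter_upwards [eventually_le_exp_mul_rpow_mul hmeas hpos hrv hε,
    eventually_forall_ge_atTop.2 hpos, eventually_gt_atTop 0] with t hbound hpos_t ht
  refine ae_restrict_of_forall_mem measurableSet_Ioi fun x (hx : 1 < x) => ?_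
  rw [norm_of_nonneg (div_nonneg (hpos_t _ (le_mul_of_one_le_right ht.le hx.le)).le
    (hpos_t t le_rfl).le), div_le_iff₀ (hpos_t t le_rfl)]
  exact hbound x hx.le

end RegularVariation

theorem integral_Ioi_one_comp_mul_div (g : ℝ → ℝ) {t : ℝ} (ht : 0 < t) (c : ℝ) :
    ∫ x in Ioi 1, g (t * x) / c = (t * c)⁻¹ * ∫ s in Ioi t, g s := by
  rw [integral_div, integral_comp_mul_left_Ioi g 1 ht, mul_one, smul_eq_mul, mul_inv]
  ring

theorem stmt_18_general (g : ℝ → ℝ) (t₀ : ℝ) (α : ℝ) (hα : α < -1)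
    (hmeas : Measurable g) (hpos : ∀ s, t₀ ≤ s → 0 < g s)
    (hrv : ∀ x : ℝ, 0 < x →
      Tendsto (fun t => g (t * x) / g t) atTop (nhds (x ^ α))) :
    (∀ᶠ t in atTop, IntegrableOn g (Set.Ioi t)) ∧
    Tendsto (fun t => t * g t / ∫ s in Set.Ioi t, g s) atTop (nhds (-α - 1)) := by
  have hpos' : ∀ᶠ s in atTop, 0 < g s := eventually_atTop.2 ⟨t₀, hpos⟩
  refine ⟨eventually_integrableOn_Ioi hmeas hpos' hrv hα, ?_⟩
  have hlim := (tendsto_integral_Ioi_one_comp_mul_div hmeas hpos' hrv hα).inv₀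
    (div_ne_zero (by norm_num) (by linarith))
  rw [inv_div, div_neg, div_one, neg_add'] at hlim
  refine hlim.congr' ((eventually_gt_atTop 0).mono fun t ht => ?_)
  rw [integral_Ioi_one_comp_mul_div g ht, mul_inv, inv_inv, ← div_eq_mul_inv]

/-- Karamata's integration theorem, convergent case: if `g` is positive, measurable and
locally bounded on `[t₀, ∞)` and regularly varying with index `α < −1`, then `g` is
integrable on `(t, ∞)` for large `t` and `t·g(t)/∫_t^∞ g(s) ds → −α − 1` as `t → ∞`. -/
theorem stmt_18 (g : ℝ → ℝ) (t₀ : ℝ) (ht₀ : 0 < t₀) (α : ℝ) (hα : α < -1)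
    (hmeas : Measurable g) (hpos : ∀ s, t₀ ≤ s → 0 < g s)
    (hbdd : ∀ b, t₀ ≤ b → ∃ C, ∀ s ∈ Set.Icc t₀ b, g s ≤ C)
    (hrv : ∀ x : ℝ, 0 < x →
      Tendsto (fun t => g (t * x) / g t) atTop (nhds (x ^ α))) :
    (∀ᶠ t in atTop, IntegrableOn g (Set.Ioi t)) ∧
    Tendsto (fun t => t * g t / ∫ s in Set.Ioi t, g s) atTop (nhds (-α - 1)) :=
  stmt_18_general g t₀ α hα hmeas hpos hrv
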